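/- (von Neumann trace inequality for quaternion matrices) For any A, B ∈ ℍ^{m×n} with singular values σ₁(A) ≥ … ≥ σ_s(A) and σ₁(B) ≥ … ≥ σ_s(B), where s = min(m,n), one has trace(A*B + B*A) ≤ 2 Σᵢ σᵢ(A)σᵢ(B). Here trace(A*B + B*A) is a real number. -/

import Mathlib

open Quaternion Matrix Finset

/-- The `m × n` rectangular diagonal quaternion matrix with diagonal entries
given by `σ : Fin (min m n) → ℝ`. -/
noncomputable def rectDiag (m n : ℕ) (σ : Fin (min m n) → ℝ) : Matrix (Fin m) (Fin n) ℍ[ℝ] :=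
  Matrix.of fun i j =>
    if h : (i : ℕ) = (j : ℕ) then ((σ ⟨i, lt_min i.isLt (h ▸ j.isLt)⟩ : ℝ) : ℍ[ℝ]) else 0

/-!
Write `P = U*X` and `Q = Y*V`, both unitary. Cycling the trace,
`Re tr(A*B) = ∑ₖₗ σₖ(A) σₗ(B) Re(Pₖₗ Qₗₖ)`, and `2 Re(pq) ≤ |p|² + |q|²` bounds this by half the
sum of `∑ₖₗ σₖ(A) σₗ(B) |Pₖₗ|²` and the analogous sum for `Q`. The matrix of squared moduli of a
unitary matrix is doubly stochastic, so by Birkhoff's theorem each of these sums is an average of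
rearrangements of `∑ₖ σₖ(A) σₖ(B)` (with the singular values padded by zeros), hence at most
that by the rearrangement inequality.
Finally `Re tr(B*A) = Re tr((A*B)*) = Re tr(A*B)`.
-/

section Rearrangement

variable {R ι : Type*} [Field R] [LinearOrder R] [IsStrictOrderedRing R] [Fintype ι]
  [DecidableEq ι]

theorem dotProduct_mulVec_le_of_mem_doublyStochastic {M : Matrix ι ι R}
    (hM : M ∈ doublyStochastic R ι) {f g : ι → R} (hfg : Monovary f g) :
    f ⬝ᵥ (M *ᵥ g) ≤ f ⬝ᵥ g := by
  obtain ⟨w, hw0, hw1, rfl⟩ := exists_eq_sum_perm_of_mem_doublyStochastic hM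
  calc f ⬝ᵥ ((∑ σ, w σ • σ.permMatrix R) *ᵥ g) = ∑ σ, w σ * (f ⬝ᵥ (g ∘ σ)) := by
        simp only [sum_mulVec, smul_mulVec, permMatrix_mulVec, dotProduct_sum, dotProduct_smul,
          smul_eq_mul]
    _ ≤ ∑ σ, w σ * (f ⬝ᵥ g) := by
        gcongr with σ
        · exact hw0 σ
        · exact hfg.sum_mul_comp_perm_le_sum_mul
    _ = f ⬝ᵥ g := by rw [← Finset.sum_mul, hw1, one_mul]

end Rearrangement

section ExtendByZero

variable {R : Type*} {s m : ℕ} (h : s ≤ m)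

theorem Fin.sum_extend_castLE_mul [CommSemiring R] (f : Fin s → R) (F : Fin m → R) :
    ∑ i, Function.extend (Fin.castLE h) f 0 i * F i = ∑ k, f k * F (k.castLE h) := by
  refine (Fintype.sum_of_injective _ (Fin.castLE_injective h) _ _ (fun i hi => ?_)
    (fun k => ?_)).symm
  · rw [Function.extend_apply' _ _ _ hi, Pi.zero_apply, zero_mul]
  · rw [(Fin.castLE_injective h).extend_apply]

theorem Fin.dotProduct_extend_castLE [CommSemiring R] (f g : Fin s → R) :
    Function.extend (Fin.castLE h) f 0 ⬝ᵥ Function.extend (Fin.castLE h) g 0 = ∑ k, f k * g k := by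
  simp only [dotProduct, Fin.sum_extend_castLE_mul, (Fin.castLE_injective h).extend_apply]

theorem Fin.dotProduct_mulVec_extend_castLE [CommSemiring R] (f g : Fin s → R)
    (M : Matrix (Fin m) (Fin m) R) :
    Function.extend (Fin.castLE h) f 0 ⬝ᵥ (M *ᵥ Function.extend (Fin.castLE h) g 0) =
      ∑ k, ∑ l, f k * M (k.castLE h) (l.castLE h) * g l := by
  simp only [dotProduct, mulVec, mul_comm (M _ _), Fin.sum_extend_castLE_mul]
  simp only [Finset.mul_sum]
  exact sum_congr rfl fun k _ => sum_congr rfl fun l _ => by ring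

theorem Fin.antitone_extend_castLE [Preorder R] [Zero R] {f : Fin s → R} (hf : Antitone f)
    (hf0 : 0 ≤ f) : Antitone (Function.extend (Fin.castLE h) f 0) := by
  intro i j hij
  by_cases hj : (j : ℕ) < s
  · obtain ⟨i', rfl⟩ : ∃ i' : Fin s, i'.castLE h = i := ⟨⟨i, by omega⟩, rfl⟩
    obtain ⟨j', rfl⟩ : ∃ j' : Fin s, j'.castLE h = j := ⟨⟨j, hj⟩, rfl⟩
    simp only [(Fin.castLE_injective h).extend_apply]
    exact hf hij
  · rw [Function.extend_apply' _ _ _ fun ⟨k, hk⟩ => hj (hk ▸ k.isLt)]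
    exact Function.extend_nonneg hf0 le_rfl i

end ExtendByZero

theorem Quaternion.re_sum {α : Type*} (s : Finset α) (f : α → ℍ[ℝ]) :
    (∑ i ∈ s, f i).re = ∑ i ∈ s, (f i).re :=
  map_sum (QuaternionAlgebra.reₗ (-1 : ℝ) 0 (-1)) f s

theorem Quaternion.two_mul_re_mul_le (p q : ℍ[ℝ]) : 2 * (p * q).re ≤ normSq p + normSq q := by
  simp only [re_mul, normSq_def']
  nlinarith [sq_nonneg (p.re - q.re), sq_nonneg (p.imI + q.imI), sq_nonneg (p.imJ + q.imJ),
    sq_nonneg (p.imK + q.imK)]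

namespace Matrix

theorem of_normSq_mem_doublyStochastic {ι : Type*} [Fintype ι] [DecidableEq ι]
    {U : Matrix ι ι ℍ[ℝ]} (hU : U ∈ unitary (Matrix ι ι ℍ[ℝ])) :
    Matrix.of (fun i j => normSq (U i j)) ∈ doublyStochastic ℝ ι := by
  rw [mem_doublyStochastic_iff_sum]
  refine ⟨fun i j => normSq_nonneg, fun i => ?_, fun j => ?_⟩
  · have := congr_arg (fun M : Matrix ι ι ℍ[ℝ] => (M i i).re) (Unitary.mul_star_self_of_mem hU)
    simpa [mul_apply, re_sum, self_mul_star] using this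
  · have := congr_arg (fun M : Matrix ι ι ℍ[ℝ] => (M j j).re) (Unitary.star_mul_self_of_mem hU)
    simpa [mul_apply, re_sum, star_mul_self] using this

theorem re_trace_mul_comm {m n : Type*} [Fintype m] [Fintype n]
    (M : Matrix m n ℍ[ℝ]) (N : Matrix n m ℍ[ℝ]) :
    (M * N).trace.re = (N * M).trace.re := by
  simp only [trace, diag_apply, mul_apply, re_sum, re_mul]
  rw [Finset.sum_comm]
  congr! 2
  ring

theorem re_trace_conjTranspose {n : Type*} [Fintype n] (M : Matrix n n ℍ[ℝ]) :
    Mᴴ.trace.re = M.trace.re := by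
  rw [trace_conjTranspose, Quaternion.re_star]

end Matrix

section RectDiag

variable {m n : ℕ}

theorem rectDiag_eq_sum_single (σ : Fin (min m n) → ℝ) :
    rectDiag m n σ = ∑ k, single (k.castLE (min_le_left m n)) (k.castLE (min_le_right m n))
      (σ k : ℍ[ℝ]) := by
  ext i j : 1
  simp only [rectDiag, of_apply, Matrix.sum_apply, single_apply, Fin.ext_iff, Fin.val_castLE]
  split_ifs with h
  · rw [Finset.sum_eq_single ⟨i, lt_min i.isLt (h ▸ j.isLt)⟩] <;> grind
  · exact (Finset.sum_eq_zero fun k _ => if_neg (by omega)).symm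

theorem re_trace_conjTranspose_rectDiag_mul (σa σb : Fin (min m n) → ℝ)
    (P : Matrix (Fin m) (Fin m) ℍ[ℝ]) (Q : Matrix (Fin n) (Fin n) ℍ[ℝ]) :
    ((rectDiag m n σa)ᴴ * P * rectDiag m n σb * Q).trace.re =
      ∑ k, ∑ l, σa k * (P (k.castLE (min_le_left m n)) (l.castLE (min_le_left m n)) *
        Q (l.castLE (min_le_right m n)) (k.castLE (min_le_right m n))).re * σb l := by
  simp only [rectDiag_eq_sum_single, conjTranspose_sum, conjTranspose_single, Matrix.sum_mul,
    Matrix.mul_sum, single_mul_mul_single, trace_sum, trace_single_mul, re_sum, star_coe,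
    smul_eq_mul]
  rw [Finset.sum_comm]
  congr! 2 with k _ l _
  rw [coe_mul_eq_smul, mul_coe_eq_smul]
  simp only [smul_mul_assoc, re_smul, smul_eq_mul]
  ring

theorem re_trace_conjTranspose_rectDiag_mul_le {σa σb : Fin (min m n) → ℝ}
    (hσa : Antitone σa) (hσa0 : 0 ≤ σa) (hσb : Antitone σb) (hσb0 : 0 ≤ σb)
    {P : Matrix (Fin m) (Fin m) ℍ[ℝ]} (hP : P ∈ unitary (Matrix (Fin m) (Fin m) ℍ[ℝ]))
    {Q : Matrix (Fin n) (Fin n) ℍ[ℝ]} (hQ : Q ∈ unitary (Matrix (Fin n) (Fin n) ℍ[ℝ])) :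
    ((rectDiag m n σa)ᴴ * P * rectDiag m n σb * Q).trace.re ≤ ∑ k, σa k * σb k := by
  have hm := min_le_left m n
  have hn := min_le_right m n
  have hP_le := dotProduct_mulVec_le_of_mem_doublyStochastic (of_normSq_mem_doublyStochastic hP)
    ((Fin.antitone_extend_castLE hm hσa hσa0).monovary (Fin.antitone_extend_castLE hm hσb hσb0))
  have hQ_le := dotProduct_mulVec_le_of_mem_doublyStochastic (of_normSq_mem_doublyStochastic hQ)
    ((Fin.antitone_extend_castLE hn hσb hσb0).monovary (Fin.antitone_extend_castLE hn hσa hσa0))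
  simp only [Fin.dotProduct_mulVec_extend_castLE, Fin.dotProduct_extend_castLE, of_apply]
    at hP_le hQ_le
  rw [re_trace_conjTranspose_rectDiag_mul]
  calc ∑ k, ∑ l, σa k * (P (k.castLE hm) (l.castLE hm) * Q (l.castLE hn) (k.castLE hn)).re * σb l
      ≤ ∑ k, ∑ l, σa k *
          ((normSq (P (k.castLE hm) (l.castLE hm)) + normSq (Q (l.castLE hn) (k.castLE hn))) / 2) *
            σb l := by
        gcongr with k _ l _
        · exact hσb0 l
        · exact hσa0 k
        · linarith [two_mul_re_mul_le (P (k.castLE hm) (l.castLE hm))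
            (Q (l.castLE hn) (k.castLE hn))]
    _ = (∑ k, ∑ l, σa k * normSq (P (k.castLE hm) (l.castLE hm)) * σb l +
          ∑ k, ∑ l, σb l * normSq (Q (l.castLE hn) (k.castLE hn)) * σa k) / 2 := by
        simp only [← sum_add_distrib, sum_div]
        exact sum_congr rfl fun k _ => sum_congr rfl fun l _ => by ring
    _ ≤ (∑ k, σa k * σb k + ∑ k, σb k * σa k) / 2 :=
        div_le_div_of_nonneg_right (add_le_add hP_le (sum_comm.trans_le hQ_le)) zero_le_two
    _ = ∑ k, σa k * σb k := by simp only [mul_comm (σb _)]; ring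

end RectDiag

/-- von Neumann type trace inequality for quaternion matrices:
`trace(A*B + B*A) ≤ 2 ∑ᵢ σᵢ(A) σᵢ(B)`, where the singular values are given
by quaternionic SVDs of `A` and `B`. -/
theorem quaternion_von_neumann_trace_inequality (m n : ℕ)
    (A B : Matrix (Fin m) (Fin n) ℍ[ℝ])
    (U X : Matrix (Fin m) (Fin m) ℍ[ℝ]) (V Y : Matrix (Fin n) (Fin n) ℍ[ℝ])
    (σA σB : Fin (min m n) → ℝ)
    (hU : Uᴴ * U = 1 ∧ U * Uᴴ = 1) (hV : Vᴴ * V = 1 ∧ V * Vᴴ = 1)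
    (hX : Xᴴ * X = 1 ∧ X * Xᴴ = 1) (hY : Yᴴ * Y = 1 ∧ Y * Yᴴ = 1)
    (hσA : ∀ i j, i ≤ j → σA j ≤ σA i) (hσAnn : ∀ i, 0 ≤ σA i)
    (hσB : ∀ i j, i ≤ j → σB j ≤ σB i) (hσBnn : ∀ i, 0 ≤ σB i)
    (hA : A = U * rectDiag m n σA * Vᴴ)
    (hB : B = X * rectDiag m n σB * Yᴴ) :
    (Matrix.trace (Aᴴ * B + Bᴴ * A)).re ≤ 2 * ∑ i, σA i * σB i := by
  have hAB : (Aᴴ * B).trace.re =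
      ((rectDiag m n σA)ᴴ * (Uᴴ * X) * rectDiag m n σB * (Yᴴ * V)).trace.re := by
    calc (Aᴴ * B).trace.re
        = (V * ((rectDiag m n σA)ᴴ * Uᴴ * X * rectDiag m n σB * Yᴴ)).trace.re := by
          simp only [hA, hB, conjTranspose_mul, conjTranspose_conjTranspose, Matrix.mul_assoc]
      _ = _ := by
          rw [re_trace_mul_comm]
          simp only [Matrix.mul_assoc]
  have hBA : (Bᴴ * A).trace.re = (Aᴴ * B).trace.re := by
    rw [← re_trace_conjTranspose, conjTranspose_mul, conjTranspose_conjTranspose]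
  have hle := re_trace_conjTranspose_rectDiag_mul_le (P := Uᴴ * X) (Q := Yᴴ * V)
    hσA hσAnn hσB hσBnn (mul_mem (Unitary.star_mem hU) hX) (mul_mem (Unitary.star_mem hY) hV)
  rw [trace_add, re_add, hBA, hAB]
  linarith
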